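/- arXiv:1811.07677 — 4 statements merged into one kernel-verified Lean document; each statement's English description precedes it below -/
import Mathlib

section
/- Let X and Y be q-independent real-valued random variables (i.e., |P(X ∈ A ∧ Y ∈ B) − P(X ∈ A)P(Y ∈ B)| ≤ q for all measurable A, B) with |X| ≤ a and |Y| ≤ b almost surely. Then |E[XY] − E[X]E[Y]| ≤ 4qab. -/
/-!
The centred indicator `1_S - P(S)` of an `X`-measurable set `S` has integral at most `q` in
absolute value over every `Y`-measurable set, so its conditional expectation given `Y` has
`L¹` norm at most `2q`; pairing it with `Y` gives `|∫_S (Y - E Y)| ≤ 2bq`. The same argument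
for `X` and `Y - E Y`, conditioning on `X`, gives `|E[X (Y - E Y)]| ≤ 2a · 2bq`.
-/

open MeasureTheory

/-- Two random variables are `q`-independent if for all measurable sets `A`, `B`,
`|P(X ∈ A ∧ Y ∈ B) − P(X ∈ A)·P(Y ∈ B)| ≤ q`. -/
def QIndep {Ω K K' : Type*} [MeasurableSpace Ω] [MeasurableSpace K] [MeasurableSpace K']
    (μ : Measure Ω) (X : Ω → K) (Y : Ω → K') (q : ℝ) : Prop :=
  ∀ A B, MeasurableSet A → MeasurableSet B →
    |(μ (X ⁻¹' A ∩ Y ⁻¹' B)).toReal - (μ (X ⁻¹' A)).toReal * (μ (Y ⁻¹' B)).toReal| ≤ q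

section
variable {Ω : Type*} {m m0 : MeasurableSpace Ω} {μ : Measure Ω}

lemma integral_abs_condExp_le_of_abs_setIntegral_le (hm : m ≤ m0) [SigmaFinite (μ.trim hm)]
    {Z : Ω → ℝ} {r : ℝ} (hZ : Integrable Z μ)
    (hr : ∀ A, MeasurableSet[m] A → |∫ ω in A, Z ω ∂μ| ≤ r) :
    ∫ ω, |μ[Z | m] ω| ∂μ ≤ 2 * r := by
  set g := μ[Z | m]
  set S : Set Ω := {ω | 0 ≤ g ω}
  have hSm : MeasurableSet[m] S := stronglyMeasurable_condExp.measurable measurableSet_Ici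
  have hS : MeasurableSet S := hm S hSm
  have hpos : ∫ ω in S, |g ω| ∂μ = ∫ ω in S, Z ω ∂μ := by
    rw [← setIntegral_condExp hm hZ hSm]
    exact setIntegral_congr_fun hS fun ω hω => abs_of_nonneg hω
  have hneg : ∫ ω in Sᶜ, |g ω| ∂μ = -∫ ω in Sᶜ, Z ω ∂μ := by
    rw [← setIntegral_condExp hm hZ hSm.compl, ← integral_neg]
    exact setIntegral_congr_fun hS.compl fun ω hω => abs_of_neg (not_le.mp hω)
  rw [← integral_add_compl hS integrable_condExp.abs, hpos, hneg]
  linarith [(abs_le.mp (hr S hSm)).2, (abs_le.mp (hr Sᶜ hSm.compl)).1]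

/-- A bounded `m`-measurable `W` sees `Z` only through `μ[Z | m]`. -/
lemma abs_integral_mul_le_of_abs_setIntegral_le [NeZero μ] (hm : m ≤ m0) [SigmaFinite (μ.trim hm)]
    {W Z : Ω → ℝ} {c r : ℝ} (hW : StronglyMeasurable[m] W) (hc : ∀ᵐ ω ∂μ, |W ω| ≤ c)
    (hZ : Integrable Z μ) (hr : ∀ A, MeasurableSet[m] A → |∫ ω in A, Z ω ∂μ| ≤ r) :
    |∫ ω, W ω * Z ω ∂μ| ≤ 2 * c * r := by
  have hc0 : 0 ≤ c := (abs_nonneg _).trans hc.exists.choose_spec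
  have hWZ : Integrable (W * Z) μ := hZ.bdd_mul (hW.mono hm).aestronglyMeasurable hc
  have hcond : ∫ ω, W ω * Z ω ∂μ = ∫ ω, W ω * μ[Z | m] ω ∂μ := by
    rw [← integral_condExp hm]
    exact integral_congr_ae (condExp_mul_of_stronglyMeasurable_left hW hWZ hZ)
  calc |∫ ω, W ω * Z ω ∂μ| = ‖∫ ω, W ω * μ[Z | m] ω ∂μ‖ := by rw [hcond, Real.norm_eq_abs]
    _ ≤ ∫ ω, c * |μ[Z | m] ω| ∂μ := by
        refine norm_integral_le_of_norm_le (integrable_condExp.abs.const_mul c) ?_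
        filter_upwards [hc] with ω hω
        rw [Real.norm_eq_abs, abs_mul]
        exact mul_le_mul_of_nonneg_right hω (abs_nonneg _)
    _ = c * ∫ ω, |μ[Z | m] ω| ∂μ := integral_const_mul c _
    _ ≤ c * (2 * r) :=
        mul_le_mul_of_nonneg_left (integral_abs_condExp_le_of_abs_setIntegral_le hm hZ hr) hc0
    _ = 2 * c * r := by ring

lemma setIntegral_sub_integral_eq_integral_mul_indicator_sub {Y : Ω → ℝ} {S : Set Ω}
    (hY : Integrable Y μ) (hS : MeasurableSet S) :
    ∫ ω in S, Y ω ∂μ - μ.real S * ∫ ω, Y ω ∂μ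
      = ∫ ω, Y ω * (S.indicator 1 ω - μ.real S) ∂μ := by
  have hpoint : (fun ω => Y ω * (S.indicator 1 ω - μ.real S))
      = fun ω => S.indicator Y ω - μ.real S * Y ω := by
    funext ω
    by_cases hω : ω ∈ S <;> simp [hω, mul_sub, mul_comm]
  rw [hpoint, integral_sub (hY.indicator hS) (hY.const_mul _), integral_indicator hS,
    integral_const_mul]

lemma setIntegral_indicator_sub_measureReal [IsFiniteMeasure μ] {S B : Set Ω}
    (hS : MeasurableSet S) :
    ∫ ω in B, (S.indicator 1 ω - μ.real S) ∂μ = μ.real (S ∩ B) - μ.real S * μ.real B := by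
  rw [integral_sub ((integrable_const 1).indicator hS).restrict (integrable_const _).restrict,
    setIntegral_indicator hS, setIntegral_const, Set.inter_comm]
  simp [mul_comm]

lemma abs_setIntegral_sub_integral_le [IsFiniteMeasure μ] [NeZero μ] {Y : Ω → ℝ} {S : Set Ω}
    {b q : ℝ} (hY : Measurable Y) (hb : ∀ᵐ ω ∂μ, |Y ω| ≤ b) (hS : MeasurableSet S)
    (hq : ∀ B, MeasurableSet B → |μ.real (S ∩ Y ⁻¹' B) - μ.real S * μ.real (Y ⁻¹' B)| ≤ q) :
    |∫ ω in S, Y ω ∂μ - μ.real S * ∫ ω, Y ω ∂μ| ≤ 2 * b * q := by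
  have hYint : Integrable Y μ := .of_bound hY.aestronglyMeasurable b hb
  rw [setIntegral_sub_integral_eq_integral_mul_indicator_sub hYint hS]
  refine abs_integral_mul_le_of_abs_setIntegral_le hY.comap_le
    (comap_measurable Y).stronglyMeasurable hb
    (((integrable_const 1).indicator hS).sub (integrable_const _)) ?_
  rintro _ ⟨B, hB, rfl⟩
  rw [setIntegral_indicator_sub_measureReal hS]
  exact hq B hB

end

theorem stmt0 {Ω : Type*} [MeasurableSpace Ω] (μ : Measure Ω) [IsProbabilityMeasure μ]
    (X Y : Ω → ℝ) (hX : Measurable X) (hY : Measurable Y)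
    (q a b : ℝ) (hq : QIndep μ X Y q)
    (ha : ∀ᵐ ω ∂μ, |X ω| ≤ a) (hb : ∀ᵐ ω ∂μ, |Y ω| ≤ b) :
    |(∫ ω, X ω * Y ω ∂μ) - (∫ ω, X ω ∂μ) * ∫ ω, Y ω ∂μ| ≤ 4 * q * a * b := by
  have hXint : Integrable X μ := .of_bound hX.aestronglyMeasurable a ha
  have hYint : Integrable Y μ := .of_bound hY.aestronglyMeasurable b hb
  set EY := ∫ ω, Y ω ∂μ
  have hcentred : ∀ A, MeasurableSet[MeasurableSpace.comap X inferInstance] A →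
      |∫ ω in A, (Y ω - EY) ∂μ| ≤ 2 * b * q := by
    rintro _ ⟨A, hA, rfl⟩
    rw [integral_sub hYint.integrableOn (integrable_const _).integrableOn, setIntegral_const,
      smul_eq_mul]
    exact abs_setIntegral_sub_integral_le hY hb (hX hA) fun B hB => hq A B hA hB
  have hcov : ∫ ω, X ω * (Y ω - EY) ∂μ = ∫ ω, X ω * Y ω ∂μ - (∫ ω, X ω ∂μ) * EY := by
    simp_rw [mul_sub]
    rw [integral_sub (hYint.bdd_mul hX.aestronglyMeasurable ha) (hXint.mul_const _),
      integral_mul_const]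
  have hbound := abs_integral_mul_le_of_abs_setIntegral_le hX.comap_le
    (comap_measurable X).stronglyMeasurable ha (hYint.sub (integrable_const EY)) hcentred
  simp only [Pi.sub_apply] at hbound
  rw [hcov] at hbound
  linarith
end

section
/- Let X, Y1, Y2 be random variables taking values in a measurable space such that Y1 and Y2 are each q-independent of X, and Y1 and Y2 are conditionally independent given X. Then Y1 and Y2 are 2q-independent. -/
/-!
Put `f = P(Y₁ ∈ A | X)`, `g = P(Y₂ ∈ B | X)` and `h = f − P(Y₁ ∈ A)`. Conditional independence
turns the covariance `P(Y₁ ∈ A, Y₂ ∈ B) − P(Y₁ ∈ A) P(Y₂ ∈ B)` into `E[h g]`. As `0 ≤ g ≤ 1` and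
`E[h] = 0`, `|E[h g]|` is at most `E[h; h ≥ 0]`. The event `{h ≥ 0}` is `X`-measurable, i.e. of
the form `{X ∈ A'}`, so `E[h; h ≥ 0] = P(X ∈ A', Y₁ ∈ A) − P(X ∈ A') P(Y₁ ∈ A) ≤ q`.
-/

open MeasureTheory

open ProbabilityTheory Set

lemma QIndep.nonneg {Ω K K' : Type*} [MeasurableSpace Ω] [MeasurableSpace K] [MeasurableSpace K']
    {μ : Measure Ω} {X : Ω → K} {Y : Ω → K'} {q : ℝ} (h : QIndep μ X Y q) : 0 ≤ q :=
  (abs_nonneg _).trans (h ∅ ∅ MeasurableSet.empty MeasurableSet.empty)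

lemma abs_integral_mul_le_setIntegral_nonneg {α : Type*} [MeasurableSpace α] {μ : Measure α}
    {h g : α → ℝ} (hh : Integrable h μ) (hh_meas : Measurable h) (hh_zero : ∫ x, h x ∂μ = 0)
    (hg : AEStronglyMeasurable g μ) (hg_mem : ∀ᵐ x ∂μ, g x ∈ Icc 0 1) :
    |∫ x, h x * g x ∂μ| ≤ ∫ x in {x | 0 ≤ h x}, h x ∂μ := by
  set S := {x | 0 ≤ h x}
  have hS : MeasurableSet S := measurableSet_le measurable_const hh_meas
  have hhg : Integrable (fun x ↦ h x * g x) μ := by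
    simpa only [mul_comm] using hh.bdd_mul (c := 1) hg <| hg_mem.mono fun x hx ↦ by
      rw [Real.norm_eq_abs, abs_of_nonneg hx.1]; exact hx.2
  have h_upper : ∫ x, h x * g x ∂μ ≤ ∫ x in S, h x ∂μ := by
    rw [← integral_indicator hS]
    refine integral_mono_ae hhg (hh.indicator hS) (hg_mem.mono fun x ⟨hg0, hg1⟩ ↦ ?_)
    by_cases hx : x ∈ S
    · rw [indicator_of_mem hx]; nlinarith [show 0 ≤ h x from hx]
    · rw [indicator_of_notMem hx]; nlinarith [show h x < 0 from not_le.mp hx]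
  have h_lower : ∫ x in Sᶜ, h x ∂μ ≤ ∫ x, h x * g x ∂μ := by
    rw [← integral_indicator hS.compl]
    refine integral_mono_ae (hh.indicator hS.compl) hhg (hg_mem.mono fun x ⟨hg0, hg1⟩ ↦ ?_)
    by_cases hx : x ∈ S
    · rw [indicator_of_notMem (not_not_intro hx)]; nlinarith [show 0 ≤ h x from hx]
    · rw [indicator_of_mem hx]; nlinarith [show h x < 0 from not_le.mp hx]
  have h_compl : ∫ x in Sᶜ, h x ∂μ = -∫ x in S, h x ∂μ := by
    linarith [integral_add_compl hS hh]
  rw [abs_le]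
  constructor <;> linarith

section CondExp

variable {Ω : Type*} {m mΩ : MeasurableSpace Ω} {μ : Measure Ω} {s t : Set Ω}

lemma condExp_indicator_one_mem_Icc [IsFiniteMeasure μ] (hm : m ≤ mΩ) (hs : MeasurableSet s) :
    ∀ᵐ ω ∂μ, (μ⟦s | m⟧) ω ∈ Icc 0 1 := by
  have h_le : μ⟦s | m⟧ ≤ᵐ[μ] μ[fun _ ↦ (1 : ℝ) | m] :=
    condExp_mono ((integrable_const 1).indicator hs) (integrable_const 1)
      (.of_forall fun ω ↦ indicator_le_self' (fun _ _ ↦ zero_le_one) ω)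
  rw [condExp_const hm] at h_le
  have h_nonneg : 0 ≤ᵐ[μ] μ⟦s | m⟧ :=
    condExp_nonneg (.of_forall fun ω ↦ indicator_nonneg (fun _ _ ↦ zero_le_one) ω)
  filter_upwards [h_nonneg, h_le] with ω h0 h1
  exact ⟨h0, h1⟩

lemma setIntegral_condExp_indicator_sub_measureReal [IsFiniteMeasure μ] (hm : m ≤ mΩ)
    (hs : MeasurableSet s) (ht : MeasurableSet[m] t) :
    ∫ ω in t, ((μ⟦s | m⟧) ω - μ.real s) ∂μ = μ.real (t ∩ s) - μ.real t * μ.real s := by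
  rw [integral_sub integrable_condExp.integrableOn (integrable_const _),
    setIntegral_condExp hm ((integrable_const 1).indicator hs) ht, setIntegral_indicator hs,
    setIntegral_const, setIntegral_const, smul_eq_mul, smul_eq_mul, mul_one]

lemma measureReal_inter_sub_mul_eq_integral [IsFiniteMeasure μ] (hm : m ≤ mΩ)
    (hs : MeasurableSet s) (ht : MeasurableSet t)
    (hst : μ⟦s ∩ t | m⟧ =ᵐ[μ] fun ω ↦ (μ⟦s | m⟧) ω * (μ⟦t | m⟧) ω) :
    μ.real (s ∩ t) - μ.real s * μ.real t = ∫ ω, ((μ⟦s | m⟧) ω - μ.real s) * (μ⟦t | m⟧) ω ∂μ := by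
  have h_prod : ∫ ω, (μ⟦s | m⟧) ω * (μ⟦t | m⟧) ω ∂μ = μ.real (s ∩ t) := by
    rw [← integral_congr_ae hst, integral_condExp hm]
    exact integral_indicator_one (hs.inter ht)
  have h_right : ∫ ω, (μ⟦t | m⟧) ω ∂μ = μ.real t := by
    rw [integral_condExp hm]
    exact integral_indicator_one ht
  simp_rw [sub_mul]
  rw [integral_sub (integrable_condExp.congr hst) (integrable_condExp.const_mul _),
    integral_const_mul, h_prod, h_right]

lemma abs_measureReal_inter_sub_mul_le [IsProbabilityMeasure μ] (hm : m ≤ mΩ)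
    (hs : MeasurableSet s) (ht : MeasurableSet t)
    (hst : μ⟦s ∩ t | m⟧ =ᵐ[μ] fun ω ↦ (μ⟦s | m⟧) ω * (μ⟦t | m⟧) ω)
    {q : ℝ} (hq : ∀ u, MeasurableSet[m] u → |μ.real (u ∩ s) - μ.real u * μ.real s| ≤ q) :
    |μ.real (s ∩ t) - μ.real s * μ.real t| ≤ q := by
  set h : Ω → ℝ := fun ω ↦ (μ⟦s | m⟧) ω - μ.real s
  have h_meas : Measurable[m] h := stronglyMeasurable_condExp.measurable.sub_const _
  have h_zero : ∫ ω, h ω ∂μ = 0 := by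
    rw [← setIntegral_univ, setIntegral_condExp_indicator_sub_measureReal hm hs MeasurableSet.univ]
    simp
  have hu : MeasurableSet[m] {ω | 0 ≤ h ω} := measurableSet_le measurable_const h_meas
  rw [measureReal_inter_sub_mul_eq_integral hm hs ht hst]
  calc |∫ ω, h ω * (μ⟦t | m⟧) ω ∂μ| ≤ ∫ ω in {ω | 0 ≤ h ω}, h ω ∂μ :=
        abs_integral_mul_le_setIntegral_nonneg (integrable_condExp.sub (integrable_const _))
          (h_meas.mono hm le_rfl) h_zero integrable_condExp.aestronglyMeasurable
          (condExp_indicator_one_mem_Icc hm ht)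
    _ = μ.real ({ω | 0 ≤ h ω} ∩ s) - μ.real {ω | 0 ≤ h ω} * μ.real s :=
        setIntegral_condExp_indicator_sub_measureReal hm hs hu
    _ ≤ q := (le_abs_self _).trans (hq _ hu)

end CondExp

theorem stmt1_general {Ω K : Type*} [MeasurableSpace Ω] [StandardBorelSpace Ω]
    [mK : MeasurableSpace K]
    (μ : Measure Ω) [IsProbabilityMeasure μ]
    (X Y₁ Y₂ : Ω → K) (hY₁ : Measurable Y₁) (hY₂ : Measurable Y₂)
    (q : ℝ)
    (h1 : QIndep μ X Y₁ q)
    (hm : MeasurableSpace.comap X mK ≤ ‹MeasurableSpace Ω›)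
    (hci : ProbabilityTheory.CondIndepFun (MeasurableSpace.comap X mK) hm Y₁ Y₂ μ) :
    QIndep μ Y₁ Y₂ (2 * q) := by
  intro A B hA hB
  have hAB := (condIndepFun_iff_condExp_inter_preimage_eq_mul hY₁ hY₂).mp hci A B hA hB
  have hq : ∀ u, MeasurableSet[MeasurableSpace.comap X mK] u →
      |μ.real (u ∩ Y₁ ⁻¹' A) - μ.real u * μ.real (Y₁ ⁻¹' A)| ≤ q := by
    rintro _ ⟨A', hA', rfl⟩
    exact h1 A' A hA' hA
  exact (abs_measureReal_inter_sub_mul_le hm (hY₁ hA) (hY₂ hB) hAB hq).trans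
    (by linarith [h1.nonneg])

theorem stmt1 {Ω K : Type*} [MeasurableSpace Ω] [StandardBorelSpace Ω] [Nonempty Ω]
    [mK : MeasurableSpace K]
    (μ : Measure Ω) [IsProbabilityMeasure μ]
    (X Y₁ Y₂ : Ω → K) (hX : Measurable X) (hY₁ : Measurable Y₁) (hY₂ : Measurable Y₂)
    (q : ℝ)
    (h1 : QIndep μ X Y₁ q) (h2 : QIndep μ X Y₂ q)
    (hm : MeasurableSpace.comap X mK ≤ ‹MeasurableSpace Ω›)
    (hci : ProbabilityTheory.CondIndepFun (MeasurableSpace.comap X mK) hm Y₁ Y₂ μ) :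
    QIndep μ Y₁ Y₂ (2 * q) :=
  stmt1_general (mK := mK) μ X Y₁ Y₂ hY₁ hY₂ q h1 hm hci
end

section
/- Let K ⊆ R^n be a convex body containing a Euclidean ball of radius r, and suppose the covariance matrix Σ of the uniform distribution on K is the identity matrix implies K is contained in a ball of radius n+1. Then in general the smallest eigenvalue of the covariance matrix Σ(0) of the uniform distribution over K satisfies λ_min(Σ(0)) ≥ (1/4)(r/(n+1))². -/
/-!
Let `Σ` be the covariance of the uniform distribution on `K` and `T = Σ^{-1/2}` (a matrix square
root). The uniform distribution on `T K` has covariance `T Σ T = 1`, so by Kannan–Lovász–Simonovits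
`T K` lies in a ball of radius `n + 1`. As `T K` contains the image of the ball `B(c, r)`, this
bounds the operator norm of `T` by `(n + 1) / r`, i.e. `Σ ≥ (r / (n + 1))² · 1`.
-/

open MeasureTheory
open scoped RealInnerProductSpace

/-- The uniform (normalized Lebesgue) distribution on a set `K`. -/
noncomputable def uniformMeasure {n : ℕ} (K : Set (EuclideanSpace ℝ (Fin n))) :
    Measure (EuclideanSpace ℝ (Fin n)) :=
  (volume K)⁻¹ • volume.restrict K

/-- The mean of a measure on Euclidean space. -/
noncomputable def meanVec {n : ℕ} (μ : Measure (EuclideanSpace ℝ (Fin n))) :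
    EuclideanSpace ℝ (Fin n) := ∫ x, x ∂μ

/-- The covariance bilinear form of a measure on Euclidean space. -/
noncomputable def covForm {n : ℕ} (μ : Measure (EuclideanSpace ℝ (Fin n)))
    (v w : EuclideanSpace ℝ (Fin n)) : ℝ :=
  ∫ x, ⟪x - meanVec μ, v⟫ * ⟪x - meanVec μ, w⟫ ∂μ

open ProbabilityTheory Metric Set
open scoped MatrixOrder ENNReal

theorem LinearMap.norm_apply_le_of_mapsTo_closedBall {E F : Type*} [NormedAddCommGroup E]
    [NormedSpace ℝ E] [NormedAddCommGroup F] [NormedSpace ℝ F] (T : E →ₗ[ℝ] F) {c : E} {c' : F}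
    {r R : ℝ} (hr : 0 < r) (hT : MapsTo T (closedBall c r) (closedBall c' R)) (u : E) :
    ‖T u‖ ≤ R / r * ‖u‖ := by
  have hsmall : ∀ u, ‖u‖ ≤ r → ‖T u‖ ≤ R := by
    intro u hu
    have h₁ := hT (x := c + u) (by simpa [dist_eq_norm] using hu)
    have h₂ := hT (x := c - u) (by simpa [dist_eq_norm] using hu)
    rw [mem_closedBall, dist_eq_norm] at h₁ h₂
    have hdiff : T (c + u) - c' - (T (c - u) - c') = (2 : ℝ) • T u := by
      rw [map_add, map_sub, two_smul]
      abel
    have := norm_sub_le (T (c + u) - c') (T (c - u) - c')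
    rw [hdiff, norm_smul, Real.norm_two] at this
    linarith
  rcases eq_or_ne u 0 with rfl | hu
  · simp
  have hu₀ : 0 < ‖u‖ := norm_pos_iff.2 hu
  have := hsmall ((r / ‖u‖) • u) (by rw [norm_smul, Real.norm_of_nonneg (by positivity),
    div_mul_cancel₀ _ hu₀.ne'])
  rw [map_smul, norm_smul, Real.norm_of_nonneg (by positivity), div_mul_eq_mul_div,
    div_le_iff₀ hu₀] at this
  rw [div_mul_eq_mul_div, le_div_iff₀ hr]
  linarith

section Whitening

variable {ι : Type*} [Fintype ι] [DecidableEq ι]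

lemma apply_eq_inner_toEuclideanCLM (B : EuclideanSpace ℝ ι →L[ℝ] EuclideanSpace ℝ ι →L[ℝ] ℝ)
    (x y : EuclideanSpace ℝ ι) :
    B x y = ⟪x, Matrix.toEuclideanCLM (𝕜 := ℝ)
      (.of fun i j => B (EuclideanSpace.single i 1) (EuclideanSpace.single j 1)) y⟫ := by
  conv_lhs => rw [← (EuclideanSpace.basisFun ι ℝ).sum_repr' x,
    ← (EuclideanSpace.basisFun ι ℝ).sum_repr' y]
  simp only [map_sum, map_smul, FunLike.coe_sum, FunLike.coe_smul, Finset.sum_apply,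
    Pi.smul_apply, EuclideanSpace.basisFun_apply, smul_eq_mul, EuclideanSpace.inner_single_left,
    map_one, one_mul, Matrix.inner_toEuclideanCLM, dotProduct, Matrix.mulVec, Matrix.of_apply,
    Finset.mul_sum]
  rw [Finset.sum_comm]
  exact Finset.sum_congr rfl fun i _ => Finset.sum_congr rfl fun j _ => by ring

theorem exists_isSelfAdjoint_whitening
    (B : EuclideanSpace ℝ ι →L[ℝ] EuclideanSpace ℝ ι →L[ℝ] ℝ)
    (hB_symm : ∀ x y, B x y = B y x) (hB_pos : ∀ x, x ≠ 0 → 0 < B x x) :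
    ∃ T : EuclideanSpace ℝ ι ≃L[ℝ] EuclideanSpace ℝ ι,
      IsSelfAdjoint (T : EuclideanSpace ℝ ι →L[ℝ] EuclideanSpace ℝ ι) ∧
      ∀ x y, B (T x) (T y) = ⟪x, y⟫ := by
  set M : Matrix ι ι ℝ := .of fun i j => B (EuclideanSpace.single i 1) (EuclideanSpace.single j 1)
  have hM : M.PosDef := by
    refine Matrix.PosDef.of_dotProduct_mulVec_pos ?_ fun x hx => ?_
    · ext i j
      exact hB_symm _ _
    · have := hB_pos (WithLp.toLp 2 x) (by simpa using hx)
      rw [apply_eq_inner_toEuclideanCLM, Matrix.inner_toEuclideanCLM] at this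
      simpa using this
  set R := CFC.sqrt M
  have hRR : R * R = M := CFC.sqrt_mul_sqrt_self M hM.posSemidef.nonneg
  have hR : IsUnit R := (CFC.isUnit_sqrt_iff _ hM.posSemidef.nonneg).2 hM.isUnit
  have hRdet : IsUnit R.det := (Matrix.isUnit_iff_isUnit_det R).1 hR
  have hRMR : R⁻¹ * M * R⁻¹ = 1 := by
    rw [← hRR, ← mul_assoc, Matrix.nonsing_inv_mul _ hRdet, one_mul, Matrix.mul_nonsing_inv _ hRdet]
  set A := Matrix.toEuclideanCLM (𝕜 := ℝ) R⁻¹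
  have hA : IsUnit A := (R.isUnit_nonsing_inv_iff.2 hR).map _
  have hA_sa : IsSelfAdjoint A :=
    IsSelfAdjoint.map (Matrix.IsHermitian.inv (CFC.sqrt_nonneg M).isSelfAdjoint) _
  have hAMA : A * Matrix.toEuclideanCLM (𝕜 := ℝ) M * A = 1 := by
    rw [← map_mul, ← map_mul, hRMR, map_one]
  refine ⟨ContinuousLinearEquiv.unitsEquiv ℝ _ hA.unit, hA_sa, fun x y => ?_⟩
  change B (A x) (A y) = _
  rw [apply_eq_inner_toEuclideanCLM, ← ContinuousLinearMap.adjoint_inner_right, hA_sa.adjoint_eq,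
    ← mul_apply_eq_comp, ← mul_apply_eq_comp, hAMA, one_apply_eq_self]

end Whitening

lemma covForm_eq_covarianceBilin {n : ℕ} (μ : Measure (EuclideanSpace ℝ (Fin n)))
    [IsFiniteMeasure μ] (hμ : MemLp id 2 μ) (v w : EuclideanSpace ℝ (Fin n)) :
    covForm μ v w = covarianceBilin μ v w := by
  simp only [covForm, covarianceBilin_apply hμ, meanVec, real_inner_comm v, real_inner_comm w]
  rfl

section UniformMeasure

variable {n : ℕ} {K : Set (EuclideanSpace ℝ (Fin n))}

instance : IsFiniteMeasure (uniformMeasure K) :=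
  inferInstanceAs (IsFiniteMeasure volume[|K])

lemma memLp_uniformMeasure {F : Type*} [NormedAddCommGroup F] (hK : IsCompact K)
    {f : EuclideanSpace ℝ (Fin n) → F} (hf : Continuous f) (p : ℝ≥0∞) :
    MemLp f p (uniformMeasure K) := by
  obtain ⟨C, hC⟩ := hK.exists_bound_of_continuousOn hf.continuousOn
  exact .of_bound hf.aestronglyMeasurable C (ae_cond_of_forall_mem hK.measurableSet hC)

lemma uniformMeasure_image (T : EuclideanSpace ℝ (Fin n) ≃L[ℝ] EuclideanSpace ℝ (Fin n)) :
    uniformMeasure (T '' K) = (uniformMeasure K).map T := by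
  have hT := T.continuous.measurable
  set d := ENNReal.ofReal |LinearMap.det (T : EuclideanSpace ℝ (Fin n) →ₗ[ℝ] _)|
  have hd : d ≠ 0 := by
    simpa [d] using (LinearEquiv.isUnit_det' T.toLinearEquiv).ne_zero
  have himage : ∀ s, volume (T '' s) = d * volume s :=
    fun s => Measure.addHaar_image_linearMap _ (T : EuclideanSpace ℝ (Fin n) →ₗ[ℝ] _) s
  ext s hs
  rw [Measure.map_apply hT hs]
  simp only [uniformMeasure, Measure.smul_apply, Measure.restrict_apply hs,
    Measure.restrict_apply (hT hs), smul_eq_mul, ← ENNReal.div_eq_inv_mul]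
  rw [inter_comm, ← image_inter_preimage, himage, himage, inter_comm,
    ENNReal.mul_div_mul_left _ _ hd ENNReal.ofReal_ne_top]

lemma covForm_uniformMeasure_self_pos (hK : IsCompact K) {c : EuclideanSpace ℝ (Fin n)} {r : ℝ}
    (hr : 0 < r) (hball : closedBall c r ⊆ K) {v : EuclideanSpace ℝ (Fin n)} (hv : v ≠ 0) :
    0 < covForm (uniformMeasure K) v v := by
  set f : EuclideanSpace ℝ (Fin n) → ℝ := fun x => ⟪x - meanVec (uniformMeasure K), v⟫
  have hf : Continuous f := by fun_prop
  refine (integral_nonneg fun x => mul_self_nonneg (f x)).lt_of_ne fun h₀ => ?_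
  have hae : (fun x => f x * f x) =ᵐ[uniformMeasure K] 0 :=
    (integral_eq_zero_iff_of_nonneg (fun x => mul_self_nonneg (f x))
      ((memLp_uniformMeasure hK (hf.mul hf) 1).integrable le_rfl)).1 h₀.symm
  have hae_ball : (fun x => f x * f x) =ᵐ[volume.restrict (ball c r)] 0 :=
    ae_restrict_of_ae_restrict_of_subset (ball_subset_closedBall.trans hball)
      ((Measure.absolutelyContinuous_smul (ENNReal.inv_ne_zero.2 hK.measure_lt_top.ne)).ae_eq hae)
  have hzero : ∀ x ∈ ball c r, f x = 0 := fun x hx => mul_self_eq_zero.1 <|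
    Measure.eqOn_open_of_ae_eq hae_ball isOpen_ball (hf.mul hf).continuousOn continuousOn_const hx
  -- `f` vanishes on the ball, yet it is affine with nonzero slope `‖v‖ ^ 2` along `v`
  have hv₀ : 0 < ‖v‖ := norm_pos_iff.2 hv
  set t := r / (2 * ‖v‖)
  have ht : t * ‖v‖ = r / 2 := by
    simp only [t]
    field_simp
  have hmem : c + t • v ∈ ball c r := by
    rw [mem_ball, dist_self_add_left, norm_smul, Real.norm_of_nonneg (by positivity), ht]
    linarith
  have haffine : f (c + t • v) = f c + t * ‖v‖ ^ 2 := by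
    simp only [f, add_sub_right_comm, inner_add_left, real_inner_smul_left,
      real_inner_self_eq_norm_sq]
  rw [hzero _ hmem, hzero c (mem_ball_self hr)] at haffine
  have : 0 < t * ‖v‖ ^ 2 := by positivity
  linarith

lemma exists_isotropic_linearEquiv_image (hK : IsCompact K) {c : EuclideanSpace ℝ (Fin n)}
    {r : ℝ} (hr : 0 < r) (hball : closedBall c r ⊆ K) :
    ∃ T : EuclideanSpace ℝ (Fin n) ≃L[ℝ] EuclideanSpace ℝ (Fin n),
      (∀ a b, covForm (uniformMeasure (T '' K)) a b = ⟪a, b⟫) ∧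
      ∀ w, covForm (uniformMeasure K) (T w) (T w) = ‖w‖ ^ 2 := by
  set μ := uniformMeasure K
  have hμ : MemLp id 2 μ := memLp_uniformMeasure hK continuous_id 2
  have hpos : ∀ x, x ≠ 0 → 0 < covarianceBilin μ x x := fun x hx => by
    rw [← covForm_eq_covarianceBilin μ hμ]
    exact covForm_uniformMeasure_self_pos hK hr hball hx
  obtain ⟨T, hT_sa, hT⟩ := exists_isSelfAdjoint_whitening _ covarianceBilin_comm hpos
  refine ⟨T, fun a b => ?_, fun w => ?_⟩
  · rw [covForm_eq_covarianceBilin _ (memLp_uniformMeasure (hK.image T.continuous) continuous_id 2),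
      uniformMeasure_image, ← T.coe_coe, covarianceBilin_map hμ, hT_sa.adjoint_eq]
    exact hT a b
  · rw [covForm_eq_covarianceBilin μ hμ, hT, real_inner_self_eq_norm_sq]

end UniformMeasure

theorem stmt6 (n : ℕ) (r : ℝ) (hr : 0 < r)
    (K : Set (EuclideanSpace ℝ (Fin n)))
    (hKconv : Convex ℝ K) (hKcomp : IsCompact K) (hKint : (interior K).Nonempty)
    (c : EuclideanSpace ℝ (Fin n)) (hball : Metric.closedBall c r ⊆ K)
    -- the Kannan–Lovász–Simonovits theorem, taken as a hypothesis:
    (hKLS : ∀ K' : Set (EuclideanSpace ℝ (Fin n)), Convex ℝ K' → IsCompact K' →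
      (interior K').Nonempty →
      (∀ v w, covForm (uniformMeasure K') v w = ⟪v, w⟫) →
      ∃ c', K' ⊆ Metric.closedBall c' (n + 1)) :
    ∀ v, (1 / 4) * (r / (n + 1)) ^ 2 * ‖v‖ ^ 2 ≤ covForm (uniformMeasure K) v v := by
  intro v
  obtain ⟨T, hT_iso, hT⟩ := exists_isotropic_linearEquiv_image hKcomp hr hball
  have hconv : Convex ℝ (T '' K) :=
    hKconv.linear_image (T : EuclideanSpace ℝ (Fin n) →ₗ[ℝ] EuclideanSpace ℝ (Fin n))
  have hint : (interior (T '' K)).Nonempty :=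
    (hKint.image T).mono (T.isOpenMap.image_interior_subset K)
  obtain ⟨c', hc'⟩ := hKLS (T '' K) hconv (hKcomp.image T.continuous) hint hT_iso
  have hT_le : ∀ u, ‖T u‖ ≤ (n + 1) / r * ‖u‖ :=
    (T : EuclideanSpace ℝ (Fin n) →ₗ[ℝ] EuclideanSpace ℝ (Fin n)).norm_apply_le_of_mapsTo_closedBall
      hr fun x hx => hc' ⟨x, hball hx, rfl⟩
  obtain ⟨w, rfl⟩ := T.surjective v
  rw [hT]
  calc 1 / 4 * (r / (n + 1)) ^ 2 * ‖T w‖ ^ 2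
      ≤ (r / (n + 1)) ^ 2 * ((n + 1) / r * ‖w‖) ^ 2 := by
        gcongr
        · linarith [sq_nonneg (r / (n + 1))]
        · exact hT_le w
    _ = ‖w‖ ^ 2 := by field_simp
end

section
/- Let Σ and Σ̂ be symmetric invertible n×n matrices such that (1−ε) v^⊤Σ̂v ≤ v^⊤Σv ≤ (1+ε) v^⊤Σ̂v for all v ∈ R^n, where 0 ≤ ε < (√5 − 1)/2. Then for all u ∈ R^n: (1 − (2ε² + ε)/(1 + ε² + ε)) u^⊤Σ̂^{-1}u ≤ u^⊤Σ^{-1}u ≤ (1 + (2ε² + 3ε)/(1 − ε² − ε)) u^⊤Σ̂^{-1}u. -/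
/-! For positive semidefinite `A`, `u ⬝ᵥ A⁻¹ *ᵥ u` is the supremum over `w` of
`2 (u ⬝ᵥ w) - w ⬝ᵥ A *ᵥ w` (attained at `w = A⁻¹ *ᵥ u`), so inversion reverses the Loewner
order. Applied to the band this gives `(1 + ε)⁻¹ Σ̂⁻¹ ≤ Σ⁻¹ ≤ (1 - ε)⁻¹ Σ̂⁻¹`, which implies the
stated bounds. For `ε > 0` the band forces both forms to be positive semidefinite; for `ε = 0` it
gives no positivity, only `Σ = Σ̂`. -/

open Matrix

namespace Matrix

variable {m : Type*} [Fintype m]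

lemma IsSymm.dotProduct_mulVec_comm {R : Type*} [CommSemiring R] {A : Matrix m m R}
    (hA : A.IsSymm) (x y : m → R) : x ⬝ᵥ A *ᵥ y = y ⬝ᵥ A *ᵥ x := by
  rw [dotProduct_mulVec, ← mulVec_transpose, hA.eq, dotProduct_comm]

variable {𝕜 : Type*} [Field 𝕜] [LinearOrder 𝕜] [IsStrictOrderedRing 𝕜] {A B : Matrix m m 𝕜}

lemma IsSymm.eq_of_forall_dotProduct_mulVec_self_eq (hA : A.IsSymm) (hB : B.IsSymm)
    (h : ∀ v, v ⬝ᵥ A *ᵥ v = v ⬝ᵥ B *ᵥ v) : A = B := by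
  set D := A - B
  have hD : D.IsSymm := hA.sub hB
  have hD_self (v : m → 𝕜) : v ⬝ᵥ D *ᵥ v = 0 := by
    simp only [D, sub_mulVec, dotProduct_sub, h v, sub_self]
  have hD_polar (x y : m → 𝕜) : x ⬝ᵥ D *ᵥ y = 0 := by
    have hxy := hD_self (x + y)
    rw [mulVec_add, dotProduct_add, add_dotProduct, add_dotProduct, hD_self, hD_self,
      hD.dotProduct_mulVec_comm y x] at hxy
    linarith
  rw [← sub_eq_zero, ext_iff_mulVec]
  intro y
  rw [zero_mulVec, ← dotProduct_self_eq_zero]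
  exact hD_polar _ y

variable [DecidableEq m]

lemma mulVec_nonsing_inv_mulVec {R : Type*} [CommRing R] {A : Matrix m m R}
    (hA : IsUnit A.det) (u : m → R) : A *ᵥ A⁻¹ *ᵥ u = u := by
  rw [mulVec_mulVec, mul_nonsing_inv _ hA, one_mulVec]

lemma two_mul_dotProduct_sub_le_dotProduct_inv_mulVec (hA : A.IsSymm)
    (hA_nonneg : ∀ x, 0 ≤ x ⬝ᵥ A *ᵥ x) (hA_det : IsUnit A.det) (u w : m → 𝕜) :
    2 * (u ⬝ᵥ w) - w ⬝ᵥ A *ᵥ w ≤ u ⬝ᵥ A⁻¹ *ᵥ u := by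
  set v := A⁻¹ *ᵥ u
  have hAv : A *ᵥ v = u := mulVec_nonsing_inv_mulVec hA_det u
  have hexpand : (w - v) ⬝ᵥ A *ᵥ (w - v) = w ⬝ᵥ A *ᵥ w - 2 * (u ⬝ᵥ w) + u ⬝ᵥ v := by
    rw [mulVec_sub, dotProduct_sub, sub_dotProduct, sub_dotProduct,
      hA.dotProduct_mulVec_comm v w, hAv, dotProduct_comm v u, dotProduct_comm w u]
    ring
  linarith [hA_nonneg (w - v)]

lemma dotProduct_inv_mulVec_le_mul_of_le (hA : A.IsSymm) (hA_nonneg : ∀ x, 0 ≤ x ⬝ᵥ A *ᵥ x)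
    (hA_det : IsUnit A.det) (hB_det : IsUnit B.det) {c : 𝕜} (hc : 0 < c)
    (h : ∀ v, v ⬝ᵥ A *ᵥ v ≤ c * (v ⬝ᵥ B *ᵥ v)) (u : m → 𝕜) :
    u ⬝ᵥ B⁻¹ *ᵥ u ≤ c * (u ⬝ᵥ A⁻¹ *ᵥ u) := by
  set q := u ⬝ᵥ B⁻¹ *ᵥ u
  set w := c⁻¹ • B⁻¹ *ᵥ u
  have huw : u ⬝ᵥ w = c⁻¹ * q := by
    simp only [w, dotProduct_smul, smul_eq_mul, q]
  have hwBw : w ⬝ᵥ B *ᵥ w = c⁻¹ * c⁻¹ * q := by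
    simp only [w, mulVec_smul, mulVec_nonsing_inv_mulVec hB_det, dotProduct_smul, smul_eq_mul,
      dotProduct_comm _ u, q]
    ring
  have hvar := two_mul_dotProduct_sub_le_dotProduct_inv_mulVec hA hA_nonneg hA_det u w
  have hq : c⁻¹ * q ≤ u ⬝ᵥ A⁻¹ *ᵥ u := by
    have hcw := h w
    rw [hwBw] at hcw
    rw [huw] at hvar
    have : c * (c⁻¹ * c⁻¹ * q) = c⁻¹ * q := by field_simp
    linarith
  rwa [inv_mul_le_iff₀ hc] at hq

end Matrix

lemma sq_add_lt_one_of_lt_sqrt_five_sub_one_div_two {ε : ℝ} (hε0 : 0 ≤ ε)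
    (hε : ε < (Real.sqrt 5 - 1) / 2) : ε ^ 2 + ε < 1 := by
  nlinarith [Real.sq_sqrt (show (0 : ℝ) ≤ 5 by norm_num), Real.sqrt_nonneg 5]

lemma loose_band_of_sharp_band {ε q qh : ℝ} (hε0 : 0 ≤ ε) (hε : ε ^ 2 + ε < 1) (hqh : 0 ≤ qh)
    (hq_le : q ≤ (1 - ε)⁻¹ * qh) (hqh_le : qh ≤ (1 + ε) * q) :
    (1 - (2 * ε ^ 2 + ε) / (1 + ε ^ 2 + ε)) * qh ≤ q ∧
      q ≤ (1 + (2 * ε ^ 2 + 3 * ε) / (1 - ε ^ 2 - ε)) * qh := by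
  have h1ε : 0 < 1 - ε := by nlinarith
  have hden : 0 < 1 - ε ^ 2 - ε := by linarith
  have hq : 0 ≤ q := by nlinarith
  constructor
  · have hden' : (0 : ℝ) < 1 + ε ^ 2 + ε := by positivity
    rw [one_sub_div hden'.ne', div_mul_eq_mul_div, div_le_iff₀ hden']
    nlinarith [mul_le_mul_of_nonneg_left hqh_le (show (0 : ℝ) ≤ 1 - ε ^ 2 by nlinarith)]
  · refine hq_le.trans (mul_le_mul_of_nonneg_right ?_ hqh)
    rw [one_add_div hden.ne', inv_eq_one_div, div_le_div_iff₀ h1ε hden]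
    nlinarith

theorem stmt10 (n : ℕ) (ε : ℝ) (hε0 : 0 ≤ ε) (hε : ε < (Real.sqrt 5 - 1) / 2)
    (S Shat : Matrix (Fin n) (Fin n) ℝ)
    (hS : S.IsSymm) (hShat : Shat.IsSymm)
    (hSinv : IsUnit S.det) (hShatinv : IsUnit Shat.det)
    (hband : ∀ v : Fin n → ℝ,
      (1 - ε) * (v ⬝ᵥ Shat.mulVec v) ≤ v ⬝ᵥ S.mulVec v ∧
        v ⬝ᵥ S.mulVec v ≤ (1 + ε) * (v ⬝ᵥ Shat.mulVec v)) :
    ∀ u : Fin n → ℝ,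
      (1 - (2 * ε ^ 2 + ε) / (1 + ε ^ 2 + ε)) * (u ⬝ᵥ Shat⁻¹.mulVec u) ≤ u ⬝ᵥ S⁻¹.mulVec u ∧
        u ⬝ᵥ S⁻¹.mulVec u ≤ (1 + (2 * ε ^ 2 + 3 * ε) / (1 - ε ^ 2 - ε)) * (u ⬝ᵥ Shat⁻¹.mulVec u) := by
  intro u
  rcases hε0.eq_or_lt with rfl | hεpos
  · obtain rfl : S = Shat :=
      hS.eq_of_forall_dotProduct_mulVec_self_eq hShat fun v => by linarith [hband v]
    norm_num
  have hε1 := sq_add_lt_one_of_lt_sqrt_five_sub_one_div_two hε0 hε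
  have h1ε : 0 < 1 - ε := by nlinarith
  have hShat_nonneg (v : Fin n → ℝ) : 0 ≤ v ⬝ᵥ Shat *ᵥ v := by nlinarith [hband v]
  have hS_nonneg (v : Fin n → ℝ) : 0 ≤ v ⬝ᵥ S *ᵥ v := by nlinarith [hband v, hShat_nonneg v]
  have hq_le := dotProduct_inv_mulVec_le_mul_of_le hShat hShat_nonneg hShatinv hSinv
    (inv_pos.2 h1ε) (fun v => (le_inv_mul_iff₀ h1ε).2 (hband v).1) u
  have hqh_le := dotProduct_inv_mulVec_le_mul_of_le hS hS_nonneg hSinv hShatinv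
    (by linarith) (fun v => (hband v).2) u
  have hqh_nonneg : 0 ≤ u ⬝ᵥ Shat⁻¹ *ᵥ u := by
    simpa using two_mul_dotProduct_sub_le_dotProduct_inv_mulVec hShat hShat_nonneg hShatinv u 0
  exact loose_band_of_sharp_band hε0 hε1 hqh_nonneg hq_le hqh_le
end
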